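/- arXiv:1610.03933 — 9 statements merged into one kernel-verified Lean document; each statement's English description precedes it below -/
import Mathlib

section
/- The Goldman Lie algebra 𝔊_ℚ of the closed torus is finitely generated as a Lie algebra over ℚ: there exists a finite subset S of 𝔊_ℚ such that the smallest Lie subalgebra containing S is all of 𝔊_ℚ. -/
/-- The underlying module of the Goldman Lie algebra of the closed torus:
the free `R`-module with basis `{e_{(i,j)} : (i,j) ∈ ℤ²}`. -/
abbrev GoldmanTorus (R : Type*) [CommRing R] := (ℤ × ℤ) →₀ R

/-- `ω((i,j),(k,l)) = i·l − j·k`. -/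
def goldmanForm (p q : ℤ × ℤ) : ℤ := p.1 * q.2 - p.2 * q.1

/-- The `R`-bilinear Goldman bracket of the closed torus, determined on basis
elements by `[e_{(i,j)}, e_{(k,l)}] = (i·l − j·k) • e_{(i+k, j+l)}`. -/
noncomputable def goldmanBracket (R : Type*) [CommRing R] :
    GoldmanTorus R →ₗ[R] GoldmanTorus R →ₗ[R] GoldmanTorus R :=
  Finsupp.lsum R fun p =>
    LinearMap.toSpanSingleton R (GoldmanTorus R →ₗ[R] GoldmanTorus R)
      (Finsupp.lsum R fun q =>
        LinearMap.toSpanSingleton R (GoldmanTorus R)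
          (goldmanForm p q • Finsupp.single (p + q) (1 : R)))

lemma goldmanBracket_single {R : Type*} [CommRing R] (p q : ℤ × ℤ) (a b : R) :
    goldmanBracket R (Finsupp.single p a) (Finsupp.single q b)
      = Finsupp.single (p + q) (a * b * (goldmanForm p q : R)) := by
  simp only [goldmanBracket, Finsupp.lsum_single, LinearMap.toSpanSingleton_apply,
    LinearMap.smul_apply, Finsupp.smul_single, smul_eq_mul, zsmul_eq_mul, mul_one]
  rw [mul_assoc]

lemma goldmanForm_swap (p q : ℤ × ℤ) : goldmanForm q p = - goldmanForm p q := by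
  simp only [goldmanForm]; ring

lemma goldmanBracket_add_comm_single {R : Type*} [CommRing R] (p : ℤ × ℤ) (a : R)
    (y : GoldmanTorus R) :
    goldmanBracket R (Finsupp.single p a) y + goldmanBracket R y (Finsupp.single p a) = 0 := by
  induction y using Finsupp.induction with
  | zero => simp
  | single_add q b f _ _ ih =>
    rw [map_add, map_add, LinearMap.add_apply]
    have h2 : goldmanBracket R (Finsupp.single p a) (Finsupp.single q b)
        + goldmanBracket R (Finsupp.single q b) (Finsupp.single p a) = 0 := by
      have hz : a * b * ((goldmanForm p q : ℤ) : R)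
          + b * a * ((goldmanForm q p : ℤ) : R) = 0 := by
        rw [goldmanForm_swap p q]; push_cast; ring
      rw [goldmanBracket_single, goldmanBracket_single, add_comm q p,
        ← Finsupp.single_add, hz, Finsupp.single_zero]
    calc goldmanBracket R (Finsupp.single p a) (Finsupp.single q b)
          + goldmanBracket R (Finsupp.single p a) f
          + (goldmanBracket R (Finsupp.single q b) (Finsupp.single p a)
          + goldmanBracket R f (Finsupp.single p a))
        = (goldmanBracket R (Finsupp.single p a) (Finsupp.single q b)
          + goldmanBracket R (Finsupp.single q b) (Finsupp.single p a))
          + (goldmanBracket R (Finsupp.single p a) f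
          + goldmanBracket R f (Finsupp.single p a)) := by abel
      _ = 0 := by rw [h2, ih, add_zero]

lemma goldmanBracket_add_comm {R : Type*} [CommRing R] (x y : GoldmanTorus R) :
    goldmanBracket R x y + goldmanBracket R y x = 0 := by
  induction x using Finsupp.induction with
  | zero => simp
  | single_add p a f _ _ ih =>
    rw [map_add, LinearMap.add_apply, map_add]
    calc goldmanBracket R (Finsupp.single p a) y + goldmanBracket R f y
          + (goldmanBracket R y (Finsupp.single p a) + goldmanBracket R y f)
        = (goldmanBracket R (Finsupp.single p a) y
            + goldmanBracket R y (Finsupp.single p a))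
          + (goldmanBracket R f y + goldmanBracket R y f) := by abel
      _ = 0 := by rw [goldmanBracket_add_comm_single, ih, add_zero]

lemma goldmanBracket_self {R : Type*} [CommRing R] (x : GoldmanTorus R) :
    goldmanBracket R x x = 0 := by
  induction x using Finsupp.induction with
  | zero => simp
  | single_add p a f _ _ ih =>
    simp only [map_add, LinearMap.add_apply]
    have hpp : goldmanBracket R (Finsupp.single p a) (Finsupp.single p a) = 0 := by
      rw [goldmanBracket_single]
      have : goldmanForm p p = 0 := by simp [goldmanForm]; ring
      simp [this]
    rw [hpp, ih]
    have h := goldmanBracket_add_comm_single p a f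
    abel_nf at h ⊢
    exact h

lemma goldmanBracket_leibniz₃ {R : Type*} [CommRing R] (p q r : ℤ × ℤ) (a b c : R) :
    goldmanBracket R (Finsupp.single p a)
        (goldmanBracket R (Finsupp.single q b) (Finsupp.single r c))
      = goldmanBracket R (goldmanBracket R (Finsupp.single p a) (Finsupp.single q b))
          (Finsupp.single r c)
        + goldmanBracket R (Finsupp.single q b)
            (goldmanBracket R (Finsupp.single p a) (Finsupp.single r c)) := by
  simp only [goldmanBracket_single]
  rw [add_assoc p q r, add_left_comm q p r, ← Finsupp.single_add]
  congr 1
  simp only [goldmanForm, Prod.fst_add, Prod.snd_add]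
  push_cast
  ring

lemma goldmanBracket_leibniz₂ {R : Type*} [CommRing R] (p q : ℤ × ℤ) (a b : R)
    (z : GoldmanTorus R) :
    goldmanBracket R (Finsupp.single p a) (goldmanBracket R (Finsupp.single q b) z)
      = goldmanBracket R (goldmanBracket R (Finsupp.single p a) (Finsupp.single q b)) z
        + goldmanBracket R (Finsupp.single q b)
            (goldmanBracket R (Finsupp.single p a) z) := by
  induction z using Finsupp.induction with
  | zero => simp
  | single_add r c f _ _ ih =>
    simp only [map_add]
    rw [goldmanBracket_leibniz₃, ih]
    abel

lemma goldmanBracket_leibniz₁ {R : Type*} [CommRing R] (p : ℤ × ℤ) (a : R)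
    (y z : GoldmanTorus R) :
    goldmanBracket R (Finsupp.single p a) (goldmanBracket R y z)
      = goldmanBracket R (goldmanBracket R (Finsupp.single p a) y) z
        + goldmanBracket R y (goldmanBracket R (Finsupp.single p a) z) := by
  induction y using Finsupp.induction with
  | zero => simp
  | single_add q b f _ _ ih =>
    simp only [map_add, LinearMap.add_apply]
    rw [goldmanBracket_leibniz₂, ih]
    abel

lemma goldmanBracket_leibniz {R : Type*} [CommRing R] (x y z : GoldmanTorus R) :
    goldmanBracket R x (goldmanBracket R y z)
      = goldmanBracket R (goldmanBracket R x y) z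
        + goldmanBracket R y (goldmanBracket R x z) := by
  induction x using Finsupp.induction with
  | zero => simp
  | single_add p a f _ _ ih =>
    simp only [map_add, LinearMap.add_apply]
    rw [goldmanBracket_leibniz₁, ih]
    abel

/-- The Goldman Lie ring structure on the free module over `ℤ²`. -/
noncomputable instance (R : Type*) [CommRing R] : LieRing (GoldmanTorus R) where
  bracket x y := goldmanBracket R x y
  add_lie x y z := by simp
  lie_add x y z := by simp
  lie_self x := goldmanBracket_self x
  leibniz_lie x y z := goldmanBracket_leibniz x y z

/-- The Goldman Lie algebra of the closed torus over `R`. -/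
noncomputable instance (R : Type*) [CommRing R] : LieAlgebra R (GoldmanTorus R) where
  lie_smul r x y := by
    show goldmanBracket R x (r • y) = r • goldmanBracket R x y
    simp

lemma goldmanTorus_lie_def {R : Type*} [CommRing R] (x y : GoldmanTorus R) :
    ⁅x, y⁆ = goldmanBracket R x y := rfl

/-!
Bracketing with `e_v` and `e_{-v}` translates `e_p` along `±v` as long as `ω(v, p) ≠ 0`, and
`ω(v, p + n v) = ω(v, p)`, so `e_p` then yields the whole line `p + ℤ v`. Starting from
`e_{±(1,0)}` and `e_{±(0,1)}` this reaches the row `j = 1`, from there every column `i ≠ 0`, and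
from those the column `i = 0` except the origin; `e_0` is central and must be a generator.
-/

open Finsupp

theorem LieSubalgebra.mem_of_lie_eq_smul {K L : Type*} [Field K] [LieRing L] [LieAlgebra K L]
    (S : LieSubalgebra K L) {x y z : L} {c : K} (hc : c ≠ 0) (hx : x ∈ S) (hy : y ∈ S)
    (h : ⁅x, y⁆ = c • z) : z ∈ S := by
  have hcz : c • z ∈ S := h ▸ S.lie_mem hx hy
  simpa [smul_smul, inv_mul_cancel₀ hc] using S.smul_mem c⁻¹ hcz

lemma goldmanForm_neg_left (p q : ℤ × ℤ) : goldmanForm (-p) q = -goldmanForm p q := by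
  simp only [goldmanForm, Prod.fst_neg, Prod.snd_neg]; ring

lemma goldmanForm_add_zsmul_self_right (v p : ℤ × ℤ) (n : ℤ) :
    goldmanForm v (p + n • v) = goldmanForm v p := by
  simp only [goldmanForm, Prod.fst_add, Prod.snd_add, Prod.smul_fst, Prod.smul_snd, smul_eq_mul]
  ring

namespace GoldmanTorus

lemma eq_top_of_single_one_mem {R : Type*} [CommRing R]
    (L : LieSubalgebra R (GoldmanTorus R)) (h : ∀ p, single p 1 ∈ L) : L = ⊤ := by
  rw [← LieSubalgebra.toSubmodule_eq_top, eq_top_iff, ← (Finsupp.basisSingleOne).span_eq,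
    Submodule.span_le, Set.range_subset_iff]
  simpa using h

variable {K : Type*} [Field K] [CharZero K] {L : LieSubalgebra K (GoldmanTorus K)} {v p q : ℤ × ℤ}

lemma single_add_mem (hp : single p 1 ∈ L) (hq : single q 1 ∈ L) (h : goldmanForm p q ≠ 0) :
    single (p + q) (1 : K) ∈ L :=
  L.mem_of_lie_eq_smul (c := (goldmanForm p q : K)) (by exact_mod_cast h) hp hq <| by
    rw [goldmanTorus_lie_def, goldmanBracket_single, smul_single_one, one_mul, one_mul]

lemma single_add_zsmul_mem (hv : single v 1 ∈ L) (hnv : single (-v) 1 ∈ L)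
    (hp : single p 1 ∈ L) (h : goldmanForm v p ≠ 0) (n : ℤ) : single (p + n • v) (1 : K) ∈ L := by
  induction n using Int.induction_on with
  | zero => simpa using hp
  | succ k ih =>
    have := single_add_mem hv ih (by rwa [goldmanForm_add_zsmul_self_right])
    convert this using 2
    rw [add_zsmul, one_zsmul]; abel
  | pred k ih =>
    have := single_add_mem hnv ih
      (by rwa [goldmanForm_neg_left, neg_ne_zero, goldmanForm_add_zsmul_self_right])
    convert this using 2
    rw [sub_zsmul, one_zsmul, neg_zsmul]; abel

end GoldmanTorus

open GoldmanTorus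

theorem goldmanTorus_rat_finitely_generated :
    ∃ S : Finset (GoldmanTorus ℚ),
      LieSubalgebra.lieSpan ℚ (GoldmanTorus ℚ) ↑S = ⊤ := by
  let a : ℤ × ℤ := (1, 0)
  let b : ℤ × ℤ := (0, 1)
  let S : Finset (GoldmanTorus ℚ) :=
    {single 0 1, single a 1, single (-a) 1, single b 1, single (-b) 1}
  refine ⟨S, eq_top_of_single_one_mem _ ?_⟩
  set L := LieSubalgebra.lieSpan ℚ (GoldmanTorus ℚ) ↑S
  have gen : ∀ x ∈ S, x ∈ L := fun x hx => LieSubalgebra.subset_lieSpan hx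
  have h0 : single 0 1 ∈ L := gen _ (by simp [S])
  have ha : single a 1 ∈ L := gen _ (by simp [S])
  have hna : single (-a) 1 ∈ L := gen _ (by simp [S])
  have hb : single b 1 ∈ L := gen _ (by simp [S])
  have hnb : single (-b) 1 ∈ L := gen _ (by simp [S])
  have row_one (i : ℤ) : single (i, (1 : ℤ)) (1 : ℚ) ∈ L := by
    convert single_add_zsmul_mem ha hna hb (by decide) i using 2
    simp [a, b]
  have column (i j : ℤ) (hi : i ≠ 0) : single (i, j) (1 : ℚ) ∈ L := by
    convert single_add_zsmul_mem hb hnb (row_one i) (by simpa [goldmanForm, b] using hi) (j - 1)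
      using 2
    simp [b]
  rintro ⟨i, j⟩
  rcases eq_or_ne i 0 with rfl | hi
  · rcases eq_or_ne j 0 with rfl | hj
    · exact h0
    · convert single_add_mem ha (column (-1) j (by simp)) (by simpa [goldmanForm, a] using hj)
        using 2
      simp [a]
  · exact column i j hi
end

section
/- The Goldman Lie algebra 𝔊_ℚ of the closed torus is not nilpotent: its lower central series never reaches zero, i.e., every term of the lower central series of 𝔊_ℚ is nonzero. -/
/-! Bracketing with `e_{(1,0)}` shifts `e_{(k,1)}` to `e_{(k+1,1)}`, because `ω((1,0),(k,1)) = 1`.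
Hence `e_{(n,1)}` is an `n`-fold bracket and lies in the `n`-th term of the lower central series,
which is therefore nonzero. -/

lemma goldmanTorus_lie_single_one_zero {R : Type*} [CommRing R] (k : ℤ) (a b : R) :
    ⁅(Finsupp.single (1, 0) a : GoldmanTorus R), Finsupp.single (k, 1) b⁆
      = (Finsupp.single (k + 1, 1) (a * b) : GoldmanTorus R) := by
  rw [goldmanTorus_lie_def, goldmanBracket_single]
  congr 1
  · rw [Prod.mk_add_mk, add_comm 1 k, zero_add]
  · simp [goldmanForm]

lemma goldmanTorus_single_mem_lowerCentralSeries {R : Type*} [CommRing R] (n : ℕ) :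
    (Finsupp.single ((n : ℤ), 1) 1 : GoldmanTorus R)
      ∈ LieModule.lowerCentralSeries R (GoldmanTorus R) (GoldmanTorus R) n := by
  induction n with
  | zero => exact LieSubmodule.mem_top _
  | succ n ih =>
    rw [LieModule.lowerCentralSeries_succ, Nat.cast_succ, ← one_mul (1 : R),
      ← goldmanTorus_lie_single_one_zero]
    exact LieSubmodule.lie_mem_lie (LieSubmodule.mem_top _) ih

lemma goldmanTorus_lowerCentralSeries_ne_bot {R : Type*} [CommRing R] [Nontrivial R] (n : ℕ) :
    LieModule.lowerCentralSeries R (GoldmanTorus R) (GoldmanTorus R) n ≠ ⊥ := fun h =>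
  Finsupp.single_ne_zero.mpr one_ne_zero <|
    (LieSubmodule.mem_bot _).mp (h ▸ goldmanTorus_single_mem_lowerCentralSeries (R := R) n)

theorem goldmanTorus_rat_not_nilpotent :
    ∀ n : ℕ, LieModule.lowerCentralSeries ℚ (GoldmanTorus ℚ) (GoldmanTorus ℚ) n ≠ ⊥ :=
  goldmanTorus_lowerCentralSeries_ne_bot
end

section
/- The Goldman Lie algebra 𝔊_ℚ of the closed torus is not solvable: its derived series never reaches zero, i.e., every term of the derived series of 𝔊_ℚ is nonzero. -/
/-! Every `p ≠ 0` splits as `q + r` with `q, r ≠ 0` and `ω(q, r) ≠ 0`, so over a field of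
characteristic zero `e_p` is a multiple of `[e_q, e_r]`; by induction every such `e_p` lies in
every term of the derived series. -/

lemma exists_add_eq_goldmanForm_ne_zero {p : ℤ × ℤ} (hp : p ≠ 0) :
    ∃ q r : ℤ × ℤ, q ≠ 0 ∧ r ≠ 0 ∧ q + r = p ∧ goldmanForm q r ≠ 0 := by
  obtain ⟨i, j⟩ := p
  by_cases hi : i = 0
  · have hj : j ≠ 0 := by rintro rfl; exact hp (by simp [hi])
    exact ⟨(1, 0), (i - 1, j), by simp, by simp [hj], by simp,
      by simpa [goldmanForm] using hj⟩
  · exact ⟨(0, 1), (i, j - 1), by simp, by simp [hi], by simp,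
      by simpa [goldmanForm] using hi⟩

lemma single_mem_derivedSeries {K : Type*} [Field K] [CharZero K] (n : ℕ) {p : ℤ × ℤ}
    (hp : p ≠ 0) (c : K) :
    Finsupp.single p c ∈ LieAlgebra.derivedSeries K (GoldmanTorus K) n := by
  induction n generalizing p c with
  | zero => simp [LieAlgebra.derivedSeries_def]
  | succ n ih =>
    obtain ⟨q, r, hq, hr, rfl, hqr⟩ := exists_add_eq_goldmanForm_ne_zero hp
    have hqr' : (goldmanForm q r : K) ≠ 0 := Int.cast_ne_zero.mpr hqr
    have hbracket : ⁅(Finsupp.single q (c / goldmanForm q r) : GoldmanTorus K),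
        Finsupp.single r 1⁆ = Finsupp.single (q + r) c := by
      rw [goldmanTorus_lie_def, goldmanBracket_single, mul_one, div_mul_cancel₀ _ hqr']
    rw [← hbracket, LieAlgebra.derivedSeries_def, LieAlgebra.derivedSeriesOfIdeal_succ]
    exact LieSubmodule.lie_mem_lie (ih hq _) (ih hr _)

theorem goldmanTorus_rat_not_solvable :
    ∀ n : ℕ, LieAlgebra.derivedSeries ℚ (GoldmanTorus ℚ) n ≠ ⊥ := by
  intro n hbot
  have hmem := single_mem_derivedSeries n (p := (1, 0)) (by simp) (1 : ℚ)
  rw [hbot, LieSubmodule.mem_bot, Finsupp.single_eq_zero] at hmem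
  exact one_ne_zero hmem
end

section
/- In the Goldman Lie algebra 𝔊_ℤ of the closed torus, for every element w of the derived Lie subalgebra [𝔊_ℤ, 𝔊_ℤ] and every (i,j) ∈ ℤ² with (i,j) ≠ (0,0), the coefficient of the basis element e_{(i,j)} in w is divisible by gcd(i,j). -/
/-!
A bracket `[e_p, e_q]` is a multiple of `e_r` with `r = p + q`, and its coefficient
`ω(p, q) = ω(p, r) = p₁ r₂ - p₂ r₁` is a combination of `r₁` and `r₂`, hence divisible by
`gcd(r₁, r₂)`. So the elements all of whose coefficients at `r` are divisible by `gcd(r₁, r₂)`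
form a Lie ideal containing every bracket, and therefore the derived algebra.
-/

lemma goldmanForm_eq_of_add_eq {p q r : ℤ × ℤ} (h : p + q = r) :
    goldmanForm p q = goldmanForm p r := by
  subst h
  simp only [goldmanForm, Prod.fst_add, Prod.snd_add]
  ring

lemma gcd_dvd_goldmanForm (p r : ℤ × ℤ) : (Int.gcd r.1 r.2 : ℤ) ∣ goldmanForm p r :=
  dvd_sub ((Int.gcd_dvd_right _ _).mul_left _) ((Int.gcd_dvd_left _ _).mul_left _)

lemma gcd_dvd_goldmanBracket_apply (x y : GoldmanTorus ℤ) (r : ℤ × ℤ) :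
    (Int.gcd r.1 r.2 : ℤ) ∣ goldmanBracket ℤ x y r := by
  induction x using Finsupp.induction_linear with
  | zero => simp
  | add x₁ x₂ h₁ h₂ =>
    simpa only [map_add, LinearMap.add_apply, Finsupp.add_apply] using dvd_add h₁ h₂
  | single p a =>
    induction y using Finsupp.induction_linear with
    | zero => simp
    | add y₁ y₂ h₁ h₂ => simpa only [map_add, Finsupp.add_apply] using dvd_add h₁ h₂
    | single q b =>
      rw [goldmanBracket_single, Finsupp.single_apply]
      split_ifs with h
      · rw [goldmanForm_eq_of_add_eq h, Int.cast_id]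
        exact (gcd_dvd_goldmanForm p r).mul_left _
      · exact dvd_zero _

def gcdDvdLieIdeal : LieIdeal ℤ (GoldmanTorus ℤ) where
  carrier := {w | ∀ r : ℤ × ℤ, (Int.gcd r.1 r.2 : ℤ) ∣ w r}
  add_mem' hv hw r := dvd_add (hv r) (hw r)
  zero_mem' _ := dvd_zero _
  smul_mem' c _ hw r := (hw r).mul_left c
  lie_mem {x y} _ r := gcd_dvd_goldmanBracket_apply x y r

lemma derived_le_gcdDvdLieIdeal :
    ⁅(⊤ : LieIdeal ℤ (GoldmanTorus ℤ)), (⊤ : LieIdeal ℤ (GoldmanTorus ℤ))⁆ ≤ gcdDvdLieIdeal := by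
  rw [LieSubmodule.lieIdeal_oper_eq_span, LieSubmodule.lieSpan_le]
  rintro _ ⟨x, y, rfl⟩ r
  exact gcd_dvd_goldmanBracket_apply x y r

theorem goldmanTorus_int_derived_coeff_gcd_dvd_general (w : GoldmanTorus ℤ)
    (hw : w ∈ ⁅(⊤ : LieIdeal ℤ (GoldmanTorus ℤ)), (⊤ : LieIdeal ℤ (GoldmanTorus ℤ))⁆)
    (i j : ℤ) :
    (Int.gcd i j : ℤ) ∣ w (i, j) :=
  derived_le_gcdDvdLieIdeal hw (i, j)

theorem goldmanTorus_int_derived_coeff_gcd_dvd (w : GoldmanTorus ℤ)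
    (hw : w ∈ ⁅(⊤ : LieIdeal ℤ (GoldmanTorus ℤ)), (⊤ : LieIdeal ℤ (GoldmanTorus ℤ))⁆)
    (i j : ℤ) (hij : (i, j) ≠ (0, 0)) :
    (Int.gcd i j : ℤ) ∣ w (i, j) :=
  goldmanTorus_int_derived_coeff_gcd_dvd_general w hw i j
end

section
/- For every integer n > 2, the element (n−1)·e_{(n,0)} of the Goldman Lie algebra 𝔊_ℤ of the closed torus does not lie in the derived Lie subalgebra [𝔊_ℤ, 𝔊_ℤ]; in particular it cannot be written as an integer linear combination of brackets of basis elements. -/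
/-! The coefficient of `e_p` in `[e_q, e_r]` vanishes unless `r = p - q`, and then it is
`ω(q, p - q) = ω(q, p)`, which is divisible by every common divisor `d` of the coordinates
of `p`. Hence `[𝔊, 𝔊]` lies in the submodule of elements whose `e_p`-coefficient is divisible
by `d`; for `p = (n, 0)` and `d = n` this excludes `(n - 1) • e_{(n,0)}`, since `n ∤ n - 1`. -/

lemma goldmanForm_sub_right (p q : ℤ × ℤ) : goldmanForm q (p - q) = goldmanForm q p := by
  simp only [goldmanForm, Prod.fst_sub, Prod.snd_sub]
  ring

lemma dvd_goldmanForm {d : ℤ} {p : ℤ × ℤ} (h₁ : d ∣ p.1) (h₂ : d ∣ p.2) (q : ℤ × ℤ) :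
    d ∣ goldmanForm q p :=
  dvd_sub (h₂.mul_left _) (h₁.mul_left _)

noncomputable def dvdCoeffSubmodule (R : Type*) [CommRing R] (d : ℤ) (p : ℤ × ℤ) :
    Submodule R (GoldmanTorus R) :=
  Submodule.comap (Finsupp.lapply p) (Ideal.span {(d : R)})

lemma mem_dvdCoeffSubmodule {R : Type*} [CommRing R] {d : ℤ} {p : ℤ × ℤ} {x : GoldmanTorus R} :
    x ∈ dvdCoeffSubmodule R d p ↔ (d : R) ∣ x p := by
  rw [dvdCoeffSubmodule, Submodule.mem_comap, Finsupp.lapply_apply, Ideal.mem_span_singleton]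

lemma goldmanBracket_mem_dvdCoeffSubmodule {R : Type*} [CommRing R] {d : ℤ} {p : ℤ × ℤ}
    (h₁ : d ∣ p.1) (h₂ : d ∣ p.2) (x y : GoldmanTorus R) :
    goldmanBracket R x y ∈ dvdCoeffSubmodule R d p := by
  induction x using Finsupp.induction_linear with
  | zero => simp
  | add x x' hx hx' => simpa using add_mem hx hx'
  | single q a =>
    induction y using Finsupp.induction_linear with
    | zero => simp
    | add y y' hy hy' => simpa using add_mem hy hy'
    | single r b =>
      rw [mem_dvdCoeffSubmodule, goldmanBracket_single, Finsupp.single_apply]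
      split_ifs with hqr
      · obtain rfl : r = p - q := eq_sub_of_add_eq' hqr
        rw [goldmanForm_sub_right]
        exact (Int.cast_dvd_cast _ _ (dvd_goldmanForm h₁ h₂ q)).mul_left _
      · exact dvd_zero _

lemma lie_top_top_le_dvdCoeffSubmodule (R : Type*) [CommRing R] {d : ℤ} {p : ℤ × ℤ}
    (h₁ : d ∣ p.1) (h₂ : d ∣ p.2) :
    (⁅(⊤ : LieIdeal R (GoldmanTorus R)), (⊤ : LieIdeal R (GoldmanTorus R))⁆ :
      LieIdeal R (GoldmanTorus R)).toSubmodule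
      ≤ dvdCoeffSubmodule R d p := by
  rw [LieSubmodule.lieIdeal_oper_eq_linear_span', Submodule.span_le]
  rintro _ ⟨x, -, y, -, rfl⟩
  exact goldmanBracket_mem_dvdCoeffSubmodule h₁ h₂ x y

theorem goldmanTorus_int_not_in_derived (n : ℤ) (hn : 2 < n) :
    (n - 1) • (Finsupp.single (n, 0) 1 : GoldmanTorus ℤ)
      ∉ ⁅(⊤ : LieIdeal ℤ (GoldmanTorus ℤ)), (⊤ : LieIdeal ℤ (GoldmanTorus ℤ))⁆ := by
  intro hmem
  have hdvd : n ∣ n - 1 := by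
    simpa [mem_dvdCoeffSubmodule] using
      lie_top_top_le_dvdCoeffSubmodule ℤ (p := (n, 0)) dvd_rfl (dvd_zero n) hmem
  have hunit : n ∣ 1 := (dvd_sub_right dvd_rfl).mp hdvd
  have hle : n ≤ 1 := Int.le_of_dvd one_pos hunit
  omega
end

section
/- The Goldman Lie algebra 𝔊_ℤ of the closed torus is not finitely generated as a Lie algebra over ℤ: there is no finite subset S of 𝔊_ℤ such that the smallest Lie subalgebra containing S is all of 𝔊_ℤ. -/
/-! For `n ≥ 2`, the elements whose coefficients at the nonzero points of the lattice `n ℤ²`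
are all divisible by `n` form a Lie subalgebra: a bracket `[e_p, e_q]` lands on `p + q`, and
`ω(p, q) = ω(p, p + q)` is divisible by `n` as soon as `p + q ∈ n ℤ²`. A finite set of elements
has support in a bounded box, so it lies in this subalgebra once `n` exceeds the box; but
`e_{(n,0)}` does not. -/

lemma goldmanForm_self_add (p q : ℤ × ℤ) : goldmanForm p (p + q) = goldmanForm p q := by
  simp only [goldmanForm, Prod.fst_add, Prod.snd_add]; ring

lemma dvd_goldmanForm_of_dvd_add {n : ℤ} {p q : ℤ × ℤ} (h₁ : n ∣ (p + q).1)
    (h₂ : n ∣ (p + q).2) : n ∣ goldmanForm p q := by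
  rw [← goldmanForm_self_add, goldmanForm]
  exact dvd_sub (h₂.mul_left _) (h₁.mul_left _)

section DvdSubalgebra

variable {R : Type*} [CommRing R]

lemma dvd_goldmanBracket_single_apply {n : ℤ} {r : ℤ × ℤ} (h₁ : n ∣ r.1) (h₂ : n ∣ r.2)
    (p q : ℤ × ℤ) (a b : R) :
    (n : R) ∣ goldmanBracket R (Finsupp.single p a) (Finsupp.single q b) r := by
  rw [goldmanBracket_single, Finsupp.single_apply]
  split_ifs with hr
  · subst hr
    exact (Int.cast_dvd_cast _ _ (dvd_goldmanForm_of_dvd_add h₁ h₂)).mul_left _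
  · exact dvd_zero _

lemma dvd_goldmanBracket_apply {n : ℤ} {r : ℤ × ℤ} (h₁ : n ∣ r.1) (h₂ : n ∣ r.2)
    (x y : GoldmanTorus R) : (n : R) ∣ goldmanBracket R x y r := by
  induction x using Finsupp.induction_linear with
  | zero => simp
  | add x x' hx hx' =>
    simpa only [map_add, LinearMap.add_apply, Finsupp.add_apply] using dvd_add hx hx'
  | single p a =>
    induction y using Finsupp.induction_linear with
    | zero => simp
    | add y y' hy hy' => simpa only [map_add, Finsupp.add_apply] using dvd_add hy hy'
    | single q b => exact dvd_goldmanBracket_single_apply h₁ h₂ p q a b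

variable (R) in
noncomputable def goldmanDvdSubalgebra (n : ℤ) : LieSubalgebra R (GoldmanTorus R) where
  carrier := {x | ∀ r : ℤ × ℤ, r ≠ 0 → n ∣ r.1 → n ∣ r.2 → (n : R) ∣ x r}
  add_mem' hx hy r hr h₁ h₂ := dvd_add (hx r hr h₁ h₂) (hy r hr h₁ h₂)
  zero_mem' := by simp
  smul_mem' c _ hx r hr h₁ h₂ := (hx r hr h₁ h₂).mul_left c
  lie_mem' {x y} _ _ r _ h₁ h₂ := dvd_goldmanBracket_apply h₁ h₂ x y

lemma single_notMem_goldmanDvdSubalgebra {n : ℤ} (hn₀ : n ≠ 0) (hn : ¬ IsUnit (n : R)) :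
    Finsupp.single (n, 0) 1 ∉ goldmanDvdSubalgebra R n := fun h ↦
  hn <| isUnit_of_dvd_one <| by
    simpa using h (n, 0) (by simp [hn₀]) dvd_rfl (dvd_zero n)

lemma le_natAbs_fst_or_le_natAbs_snd_of_dvd {n : ℕ} {r : ℤ × ℤ} (hr : r ≠ 0)
    (h₁ : (n : ℤ) ∣ r.1) (h₂ : (n : ℤ) ∣ r.2) : n ≤ r.1.natAbs ∨ n ≤ r.2.natAbs := by
  by_cases hr₁ : r.1 = 0
  · have hr₂ : r.2 ≠ 0 := fun hr₂ ↦ hr (Prod.ext hr₁ hr₂)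
    exact Or.inr (Nat.le_of_dvd (Int.natAbs_pos.mpr hr₂) (Int.natCast_dvd.mp h₂))
  · exact Or.inl (Nat.le_of_dvd (Int.natAbs_pos.mpr hr₁) (Int.natCast_dvd.mp h₁))

lemma mem_goldmanDvdSubalgebra_of_support_bounded {n : ℕ} {x : GoldmanTorus R}
    (hx : ∀ r ∈ x.support, r.1.natAbs < n ∧ r.2.natAbs < n) :
    x ∈ goldmanDvdSubalgebra R n := by
  intro r hr h₁ h₂
  by_cases hxr : r ∈ x.support
  · have := hx r hxr
    have := le_natAbs_fst_or_le_natAbs_snd_of_dvd hr h₁ h₂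
    omega
  · simp [Finsupp.notMem_support_iff.mp hxr]

end DvdSubalgebra

lemma Finset.exists_natAbs_lt (T : Finset (ℤ × ℤ)) :
    ∃ B : ℕ, ∀ r ∈ T, r.1.natAbs < B ∧ r.2.natAbs < B := by
  refine ⟨T.sup (fun r ↦ max r.1.natAbs r.2.natAbs) + 1, fun r hr ↦ ?_⟩
  have := Finset.le_sup (f := fun r ↦ max r.1.natAbs r.2.natAbs) hr
  omega

theorem goldmanTorus_int_not_finitely_generated :
    ¬ ∃ S : Finset (GoldmanTorus ℤ),
        LieSubalgebra.lieSpan ℤ (GoldmanTorus ℤ) ↑S = ⊤ := by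
  rintro ⟨S, hS⟩
  obtain ⟨B, hB⟩ := (S.biUnion Finsupp.support).exists_natAbs_lt
  have hS_le :
      LieSubalgebra.lieSpan ℤ (GoldmanTorus ℤ) ↑S ≤ goldmanDvdSubalgebra ℤ (B + 2 : ℕ) :=
    LieSubalgebra.lieSpan_le.mpr fun x hx ↦ mem_goldmanDvdSubalgebra_of_support_bounded
      fun r hr ↦ by have := hB r (Finset.mem_biUnion.mpr ⟨x, hx, hr⟩); omega
  refine single_notMem_goldmanDvdSubalgebra (R := ℤ) (n := (B + 2 : ℕ)) (by omega) ?_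
    (hS_le (hS ▸ LieSubalgebra.mem_top _))
  rw [Int.isUnit_iff]
  push_cast
  omega
end

section
/- The lower central series of the Goldman Lie algebra 𝔊_ℤ of the closed torus stabilizes at the first step: with G₀ = 𝔊_ℤ and G_{n+1} = [𝔊_ℤ, G_n], one has G_n = [𝔊_ℤ, 𝔊_ℤ] for every n ≥ 1; equivalently, [𝔊_ℤ, [𝔊_ℤ, 𝔊_ℤ]] = [𝔊_ℤ, 𝔊_ℤ]. -/
/-! Each `[e_p, e_q] = ω(p, q) e_{p+q}` is an `R`-combination of `ω(s, t) e_s` with `s = p + q` and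
`t ∈ {(1,0), (0,1)}`, since `ω(p, q) = ω(p, s)` is linear in `p`. Such a term equals
`[e_{s-t}, e_t]`, and `e_t` is itself a bracket, e.g. `e_{(1,0)} = [e_{(1,-1)}, e_{(0,1)}]`.
The argument works over every commutative ring. -/

theorem LieModule.lowerCentralSeries_eq_of_succ_eq {R L M : Type*} [CommRing R] [LieRing L]
    [LieAlgebra R L] [AddCommGroup M] [Module R M] [LieRingModule L M] {k : ℕ}
    (h : lowerCentralSeries R L M (k + 1) = lowerCentralSeries R L M k) {n : ℕ} (hn : k ≤ n) :
    lowerCentralSeries R L M n = lowerCentralSeries R L M k := by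
  induction n, hn using Nat.le_induction with
  | base => rfl
  | succ n _ ih => rw [lowerCentralSeries_succ, ih, ← lowerCentralSeries_succ, h]

namespace GoldmanTorus

open Finsupp LieSubmodule

variable {R : Type*} [CommRing R]

lemma goldmanForm_sub_left (s t : ℤ × ℤ) : goldmanForm (s - t) t = goldmanForm s t := by
  simp only [goldmanForm, Prod.fst_sub, Prod.snd_sub]; ring

lemma lie_single_sub_single (s t : ℤ × ℤ) (a b : R) :
    ⁅(single (s - t) a : GoldmanTorus R), single t b⁆ = single s (a * b * goldmanForm s t) := by
  rw [goldmanTorus_lie_def, goldmanBracket_single, sub_add_cancel, goldmanForm_sub_left]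

lemma single_mul_goldmanForm_mem_lie_top {I : LieIdeal R (GoldmanTorus R)} {t : ℤ × ℤ}
    (ht : single t 1 ∈ I) (s : ℤ × ℤ) (a : R) :
    single s (a * goldmanForm s t) ∈ ⁅(⊤ : LieIdeal R (GoldmanTorus R)), I⁆ := by
  simpa only [lie_single_sub_single, mul_one] using lie_mem_lie (mem_top (single (s - t) a)) ht

lemma single_one_mem_derived_of_goldmanForm_eq_one {t u : ℤ × ℤ} (h : goldmanForm t u = 1) :
    (single t 1 : GoldmanTorus R) ∈ ⁅(⊤ : LieIdeal R (GoldmanTorus R)),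
        (⊤ : LieIdeal R (GoldmanTorus R))⁆ := by
  simpa only [h, Int.cast_one, mul_one] using
    single_mul_goldmanForm_mem_lie_top (mem_top (single u (1 : R))) t 1

lemma lie_single_single_mem_lie_top_derived (p q : ℤ × ℤ) (a b : R) :
    ⁅(single p a : GoldmanTorus R), single q b⁆
      ∈ ⁅(⊤ : LieIdeal R (GoldmanTorus R)), ⁅(⊤ : LieIdeal R (GoldmanTorus R)),
        (⊤ : LieIdeal R (GoldmanTorus R))⁆⁆ := by
  have h₁ := single_mul_goldmanForm_mem_lie_top (R := R)
    (single_one_mem_derived_of_goldmanForm_eq_one (t := (1, 0)) (u := (0, 1)) rfl)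
    (p + q) (-(a * b * p.1))
  have h₂ := single_mul_goldmanForm_mem_lie_top (R := R)
    (single_one_mem_derived_of_goldmanForm_eq_one (t := (0, 1)) (u := (-1, 0)) rfl)
    (p + q) (-(a * b * p.2))
  have hsplit : ⁅(single p a : GoldmanTorus R), single q b⁆
      = single (p + q) (-(a * b * p.1) * goldmanForm (p + q) (1, 0))
        + single (p + q) (-(a * b * p.2) * goldmanForm (p + q) (0, 1)) := by
    rw [goldmanTorus_lie_def, goldmanBracket_single, ← single_add]
    congr 1
    simp only [goldmanForm, Prod.fst_add, Prod.snd_add]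
    push_cast
    ring
  rw [hsplit]
  exact add_mem h₁ h₂

lemma lie_mem_lie_top_derived (x y : GoldmanTorus R) :
    ⁅x, y⁆ ∈ ⁅(⊤ : LieIdeal R (GoldmanTorus R)), ⁅(⊤ : LieIdeal R (GoldmanTorus R)),
      (⊤ : LieIdeal R (GoldmanTorus R))⁆⁆ := by
  induction x using Finsupp.induction_linear with
  | zero => simp
  | add x₁ x₂ h₁ h₂ => rw [add_lie]; exact add_mem h₁ h₂
  | single p a =>
    induction y using Finsupp.induction_linear with
    | zero => simp
    | add y₁ y₂ h₁ h₂ => rw [lie_add]; exact add_mem h₁ h₂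
    | single q b => exact lie_single_single_mem_lie_top_derived p q a b

theorem lie_top_derived_eq_derived :
    ⁅(⊤ : LieIdeal R (GoldmanTorus R)), ⁅(⊤ : LieIdeal R (GoldmanTorus R)),
        (⊤ : LieIdeal R (GoldmanTorus R))⁆⁆
      = ⁅(⊤ : LieIdeal R (GoldmanTorus R)), (⊤ : LieIdeal R (GoldmanTorus R))⁆ :=
  le_antisymm (lie_le_right _ _)
    ((lie_le_iff _ _ _).mpr fun x _ y _ => lie_mem_lie_top_derived x y)

end GoldmanTorus

theorem goldmanTorus_int_lowerCentralSeries_stabilizes :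
    (∀ n : ℕ, 1 ≤ n →
      LieModule.lowerCentralSeries ℤ (GoldmanTorus ℤ) (GoldmanTorus ℤ) n
        = ⁅(⊤ : LieIdeal ℤ (GoldmanTorus ℤ)), (⊤ : LieIdeal ℤ (GoldmanTorus ℤ))⁆) ∧
    ⁅(⊤ : LieIdeal ℤ (GoldmanTorus ℤ)),
        ⁅(⊤ : LieIdeal ℤ (GoldmanTorus ℤ)), (⊤ : LieIdeal ℤ (GoldmanTorus ℤ))⁆⁆
      = ⁅(⊤ : LieIdeal ℤ (GoldmanTorus ℤ)), (⊤ : LieIdeal ℤ (GoldmanTorus ℤ))⁆ := by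
  have hderived := GoldmanTorus.lie_top_derived_eq_derived (R := ℤ)
  have hone : LieModule.lowerCentralSeries ℤ (GoldmanTorus ℤ) (GoldmanTorus ℤ) 1
      = ⁅(⊤ : LieIdeal ℤ (GoldmanTorus ℤ)), ⊤⁆ := rfl
  have hstable : LieModule.lowerCentralSeries ℤ (GoldmanTorus ℤ) (GoldmanTorus ℤ) (1 + 1)
      = LieModule.lowerCentralSeries ℤ (GoldmanTorus ℤ) (GoldmanTorus ℤ) 1 := by
    rw [LieModule.lowerCentralSeries_succ, hone, hderived]
  exact ⟨fun n hn => (LieModule.lowerCentralSeries_eq_of_succ_eq hstable hn).trans hone, hderived⟩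
end

section
/- In the Goldman Lie algebra 𝔊_ℤ of the closed torus, for every (i,j) ∈ ℤ² with (i,j) ≠ (0,0), the element gcd(i,j)·e_{(i,j)} lies in [𝔊_ℤ, [𝔊_ℤ, 𝔊_ℤ]]: explicitly, writing d = gcd(i,j) = x·i + y·j with x, y ∈ ℤ, one has [e_{(i+y, j−x)}, e_{(−y, x)}] = d·e_{(i,j)}, where e_{(−y,x)} itself lies in the derived subalgebra [𝔊_ℤ, 𝔊_ℤ]. -/
/-! The bracket `[e_{p-q}, e_q] = ω(p,q) e_p` shows `ω(p,q) e_p ∈ [𝔊, 𝔊]` for all `p, q`. For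
`p = (i,j)` and `q = (-y,x)` the coefficient is `x i + y j = gcd(i,j)`; and `e_{(-y,x)}` itself lies
in `[𝔊, 𝔊]` because `(-y,x)` is primitive: `ω((-y,x), -(i,j)/gcd(i,j)) = 1`. -/

section

variable {R : Type*} [CommRing R]

lemma goldmanForm_sub_left (p q : ℤ × ℤ) : goldmanForm (p - q) q = goldmanForm p q := by
  simp only [goldmanForm, Prod.fst_sub, Prod.snd_sub]
  ring

lemma goldmanTorus_lie_single_sub_single (p q : ℤ × ℤ) (a b : R) :
    ⁅(Finsupp.single (p - q) a : GoldmanTorus R), Finsupp.single q b⁆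
      = Finsupp.single p (a * b * (goldmanForm p q : R)) := by
  rw [goldmanTorus_lie_def, goldmanBracket_single, sub_add_cancel, goldmanForm_sub_left]

lemma goldmanTorus_single_mem_derived_of_goldmanForm_eq_one {p q : ℤ × ℤ}
    (h : goldmanForm p q = 1) (a : R) :
    (Finsupp.single p a : GoldmanTorus R)
      ∈ ⁅(⊤ : LieIdeal R (GoldmanTorus R)), (⊤ : LieIdeal R (GoldmanTorus R))⁆ := by
  have hbracket := goldmanTorus_lie_single_sub_single (R := R) p q a 1
  rw [h, Int.cast_one, mul_one, mul_one] at hbracket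
  exact hbracket ▸ LieSubmodule.lie_mem_lie (LieSubmodule.mem_top _) (LieSubmodule.mem_top _)

end

lemma exists_goldmanForm_eq_one_of_gcd_eq {i j x y : ℤ} (hij : (i, j) ≠ (0, 0))
    (hxy : (Int.gcd i j : ℤ) = x * i + y * j) : ∃ q, goldmanForm (-y, x) q = 1 := by
  set d : ℤ := (Int.gcd i j : ℤ)
  have hd : d ≠ 0 := by
    rw [Ne, Int.natCast_eq_zero, Int.gcd_eq_zero_iff]
    rintro ⟨rfl, rfl⟩
    exact hij rfl
  refine ⟨(-(i / d), -(j / d)), mul_left_cancel₀ hd ?_⟩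
  calc d * goldmanForm (-y, x) (-(i / d), -(j / d))
      = x * (d * (i / d)) + y * (d * (j / d)) := by simp only [goldmanForm]; ring
    _ = d * 1 := by
      rw [Int.mul_ediv_cancel' (Int.gcd_dvd_left i j), Int.mul_ediv_cancel' (Int.gcd_dvd_right i j),
        hxy, mul_one]

theorem goldmanTorus_int_gcd_smul_mem_second_lcs (i j x y : ℤ)
    (hij : (i, j) ≠ (0, 0)) (hxy : (Int.gcd i j : ℤ) = x * i + y * j) :
    ⁅(Finsupp.single (i + y, j - x) 1 : GoldmanTorus ℤ),
        (Finsupp.single (-y, x) 1 : GoldmanTorus ℤ)⁆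
        = (Int.gcd i j : ℤ) • (Finsupp.single (i, j) 1 : GoldmanTorus ℤ) ∧
    (Finsupp.single (-y, x) 1 : GoldmanTorus ℤ)
        ∈ ⁅(⊤ : LieIdeal ℤ (GoldmanTorus ℤ)), (⊤ : LieIdeal ℤ (GoldmanTorus ℤ))⁆ ∧
    (Int.gcd i j : ℤ) • (Finsupp.single (i, j) 1 : GoldmanTorus ℤ)
        ∈ ⁅(⊤ : LieIdeal ℤ (GoldmanTorus ℤ)),
            ⁅(⊤ : LieIdeal ℤ (GoldmanTorus ℤ)), (⊤ : LieIdeal ℤ (GoldmanTorus ℤ))⁆⁆ := by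
  have hsub : ((i + y, j - x) : ℤ × ℤ) = (i, j) - (-y, x) :=
    Prod.ext (sub_neg_eq_add i y).symm rfl
  have hform : goldmanForm (i, j) (-y, x) = Int.gcd i j := by
    rw [hxy, goldmanForm]
    ring
  have hbracket : ⁅(Finsupp.single (i + y, j - x) 1 : GoldmanTorus ℤ),
      (Finsupp.single (-y, x) 1 : GoldmanTorus ℤ)⁆
      = (Int.gcd i j : ℤ) • (Finsupp.single (i, j) 1 : GoldmanTorus ℤ) := by
    rw [hsub, goldmanTorus_lie_single_sub_single, hform, Finsupp.smul_single, smul_eq_mul,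
      Int.cast_id, mul_one, mul_one, one_mul]
  obtain ⟨q, hq⟩ := exists_goldmanForm_eq_one_of_gcd_eq hij hxy
  have hmem := goldmanTorus_single_mem_derived_of_goldmanForm_eq_one hq (1 : ℤ)
  exact ⟨hbracket, hmem, hbracket ▸ LieSubmodule.lie_mem_lie (LieSubmodule.mem_top _) hmem⟩
end

section
/- In the Goldman Lie algebra 𝔊_ℤ of the closed torus, for every nonzero integer n, the element n·e_{(n,0)} lies in [𝔊_ℤ, [𝔊_ℤ, 𝔊_ℤ]]: explicitly, for any integer i one has [e_{(i,−1)}, e_{(n−i,1)}] = n·e_{(n,0)}, where e_{(n−i,1)} lies in the derived subalgebra [𝔊_ℤ, 𝔊_ℤ] since gcd(n−i, 1) = 1; similarly n·e_{(0,n)} lies in [𝔊_ℤ, [𝔊_ℤ, 𝔊_ℤ]]. -/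
/-! The classes `e_{(k,1)}` and `e_{(-1,k)}` are themselves brackets of two basis elements with
`ω = 1`, e.g. `[e_{(k+1,1)}, e_{(-1,0)}]`, so they lie in `[𝔊, 𝔊]`. Bracketing them once more
with `e_{(0,-1)}` resp. `e_{(1,0)}`, where `ω` takes the value `n`, gives `n • e_{(n,0)}` and
`n • e_{(0,n)}` in `[𝔊, [𝔊, 𝔊]]`. -/

namespace GoldmanTorus

variable {R : Type*} [CommRing R]

lemma lie_single_one (p q : ℤ × ℤ) :
    ⁅(Finsupp.single p 1 : GoldmanTorus R), Finsupp.single q 1⁆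
      = (goldmanForm p q : R) • Finsupp.single (p + q) (1 : R) := by
  rw [goldmanTorus_lie_def, goldmanBracket_single]
  simp [Finsupp.smul_single]

lemma smul_single_mem_lie_top {I : LieIdeal R (GoldmanTorus R)} (p q : ℤ × ℤ)
    (hq : Finsupp.single q 1 ∈ I) :
    (goldmanForm p q : R) • Finsupp.single (p + q) (1 : R)
      ∈ ⁅(⊤ : LieIdeal R (GoldmanTorus R)), I⁆ :=
  lie_single_one (R := R) p q ▸ LieSubmodule.lie_mem_lie trivial hq

lemma single_add_mem_derived_of_goldmanForm_eq_one {p q : ℤ × ℤ} (hpq : goldmanForm p q = 1) :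
    Finsupp.single (p + q) (1 : R)
      ∈ ⁅(⊤ : LieIdeal R (GoldmanTorus R)), (⊤ : LieIdeal R (GoldmanTorus R))⁆ := by
  simpa [hpq] using smul_single_mem_lie_top (I := (⊤ : LieIdeal R (GoldmanTorus R))) p q trivial

lemma single_row_mem_derived (k : ℤ) :
    Finsupp.single (k, 1) (1 : R)
      ∈ ⁅(⊤ : LieIdeal R (GoldmanTorus R)), (⊤ : LieIdeal R (GoldmanTorus R))⁆ := by
  simpa using single_add_mem_derived_of_goldmanForm_eq_one (R := R)
    (p := (k + 1, 1)) (q := (-1, 0)) (by simp [goldmanForm])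

lemma single_column_mem_derived (k : ℤ) :
    Finsupp.single (-1, k) (1 : R)
      ∈ ⁅(⊤ : LieIdeal R (GoldmanTorus R)), (⊤ : LieIdeal R (GoldmanTorus R))⁆ := by
  simpa using single_add_mem_derived_of_goldmanForm_eq_one (R := R)
    (p := (-1, k + 1)) (q := (0, -1)) (by simp [goldmanForm])

end GoldmanTorus

open GoldmanTorus in
theorem goldmanTorus_int_n_smul_mem_second_lcs_general (n : ℤ) :
    (∀ i : ℤ,
      ⁅(Finsupp.single (i, -1) 1 : GoldmanTorus ℤ),
          (Finsupp.single (n - i, 1) 1 : GoldmanTorus ℤ)⁆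
          = n • (Finsupp.single (n, 0) 1 : GoldmanTorus ℤ) ∧
      (Finsupp.single (n - i, 1) 1 : GoldmanTorus ℤ)
          ∈ ⁅(⊤ : LieIdeal ℤ (GoldmanTorus ℤ)), (⊤ : LieIdeal ℤ (GoldmanTorus ℤ))⁆) ∧
    n • (Finsupp.single (n, 0) 1 : GoldmanTorus ℤ)
        ∈ ⁅(⊤ : LieIdeal ℤ (GoldmanTorus ℤ)),
            ⁅(⊤ : LieIdeal ℤ (GoldmanTorus ℤ)), (⊤ : LieIdeal ℤ (GoldmanTorus ℤ))⁆⁆ ∧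
    n • (Finsupp.single (0, n) 1 : GoldmanTorus ℤ)
        ∈ ⁅(⊤ : LieIdeal ℤ (GoldmanTorus ℤ)),
            ⁅(⊤ : LieIdeal ℤ (GoldmanTorus ℤ)), (⊤ : LieIdeal ℤ (GoldmanTorus ℤ))⁆⁆ := by
  refine ⟨fun i => ⟨?_, single_row_mem_derived (n - i)⟩, ?_, ?_⟩
  · have hω : goldmanForm (i, -1) (n - i, 1) = n := by simp only [goldmanForm]; ring
    simp [lie_single_one, hω]
  · simpa [goldmanForm] using
      smul_single_mem_lie_top (R := ℤ) (0, -1) (n, 1) (single_row_mem_derived n)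
  · simpa [goldmanForm] using
      smul_single_mem_lie_top (R := ℤ) (1, 0) (-1, n) (single_column_mem_derived n)

theorem goldmanTorus_int_n_smul_mem_second_lcs (n : ℤ) (hn : n ≠ 0) :
    (∀ i : ℤ,
      ⁅(Finsupp.single (i, -1) 1 : GoldmanTorus ℤ),
          (Finsupp.single (n - i, 1) 1 : GoldmanTorus ℤ)⁆
          = n • (Finsupp.single (n, 0) 1 : GoldmanTorus ℤ) ∧
      (Finsupp.single (n - i, 1) 1 : GoldmanTorus ℤ)
          ∈ ⁅(⊤ : LieIdeal ℤ (GoldmanTorus ℤ)), (⊤ : LieIdeal ℤ (GoldmanTorus ℤ))⁆) ∧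
    n • (Finsupp.single (n, 0) 1 : GoldmanTorus ℤ)
        ∈ ⁅(⊤ : LieIdeal ℤ (GoldmanTorus ℤ)),
            ⁅(⊤ : LieIdeal ℤ (GoldmanTorus ℤ)), (⊤ : LieIdeal ℤ (GoldmanTorus ℤ))⁆⁆ ∧
    n • (Finsupp.single (0, n) 1 : GoldmanTorus ℤ)
        ∈ ⁅(⊤ : LieIdeal ℤ (GoldmanTorus ℤ)),
            ⁅(⊤ : LieIdeal ℤ (GoldmanTorus ℤ)), (⊤ : LieIdeal ℤ (GoldmanTorus ℤ))⁆⁆ :=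
  goldmanTorus_int_n_smul_mem_second_lcs_general n
end
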